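/- No-passing rule for the ground-state evolution of the random-field Ising model (decreasing field): if C₁ is a ground state at field H₁ and C₂ is a ground state at field H₂ with H₂ < H₁, then for every site i, C₁ i = -1 implies C₂ i = -1; down spins stay down as the field is decreased. -/

import Mathlib

open Finset

section RFIM

variable {V : Type*} [Fintype V] [Nonempty V] [DecidableEq V]
variable (G : SimpleGraph V) [DecidableRel G.Adj]
variable (J : ℝ) (h : V → ℝ)

/-- A spin configuration: every spin is `-1` or `+1`. -/
def IsSpin (σ : V → ℤ) : Prop := ∀ i, σ i = -1 ∨ σ i = 1

/-- The product of the two spins at the endpoints of an (unordered) edge. -/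
noncomputable def pairProd (σ : V → ℤ) : Sym2 V → ℝ :=
  Sym2.lift ⟨fun i j => (σ i : ℝ) * (σ j : ℝ), fun i j => by ring⟩

/-- Energy of configuration `σ` at external field `H`. -/
noncomputable def E (σ : V → ℤ) (H : ℝ) : ℝ :=
  -J * (∑ e ∈ G.edgeFinset, pairProd σ e) - ∑ i, (H + h i) * (σ i : ℝ)

/-- Magnetization. -/
noncomputable def M (σ : V → ℤ) : ℝ := ∑ i, (σ i : ℝ)

/-- Energy at zero field. -/
noncomputable def E₀ (σ : V → ℤ) : ℝ := E G J h σ 0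

/-- `σ` is a ground state at field `H`. -/
def IsGroundState (H : ℝ) (σ : V → ℤ) : Prop :=
  IsSpin σ ∧ ∀ τ : V → ℤ, IsSpin τ → E G J h σ H ≤ E G J h τ H

end RFIM

/-! The proof is a lattice argument. With respect to the pointwise order on configurations, the
ferromagnetic zero-field energy `E₀` is submodular (the product of two spins is supermodular and
`J ≥ 0`), while the magnetization `M` and every field term are modular. Comparing the ground
states `C₂` at field `H₂` and `C₁` at field `H₁` with `C₁ ⊓ C₂` and `C₁ ⊔ C₂` yields
`(H₁ - H₂) (M (C₁ ⊔ C₂) - M C₁) ≤ 0`, so `M (C₁ ⊔ C₂) = M C₁` and, `M` being strictly monotone,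
`C₂ ≤ C₁`. -/

lemma mul_add_mul_le_min_mul_min_add_max_mul_max {R : Type*} [CommRing R] [LinearOrder R]
    [IsStrictOrderedRing R] (a b c d : R) :
    a * b + c * d ≤ min a c * min b d + max a c * max b d := by
  rcases le_total a c with hac | hca <;> rcases le_total b d with hbd | hdb <;>
    simp only [min_eq_left, min_eq_right, max_eq_left, max_eq_right, *] <;> nlinarith

section

variable {V : Type*}

lemma IsSpin.inf {σ τ : V → ℤ} (hσ : IsSpin σ) (hτ : IsSpin τ) : IsSpin (σ ⊓ τ) := by
  intro i
  rcases hσ i with h1 | h1 <;> rcases hτ i with h2 | h2 <;> simp [h1, h2]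

lemma IsSpin.sup {σ τ : V → ℤ} (hσ : IsSpin σ) (hτ : IsSpin τ) : IsSpin (σ ⊔ τ) := by
  intro i
  rcases hσ i with h1 | h1 <;> rcases hτ i with h2 | h2 <;> simp [h1, h2]

lemma pairProd_add_pairProd_le (σ τ : V → ℤ) (e : Sym2 V) :
    pairProd σ e + pairProd τ e ≤ pairProd (σ ⊓ τ) e + pairProd (σ ⊔ τ) e := by
  induction e using Sym2.ind with
  | _ i j =>
    simp only [pairProd, Sym2.lift_mk, Pi.inf_apply, Pi.sup_apply, Int.cast_min, Int.cast_max]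
    exact mul_add_mul_le_min_mul_min_add_max_mul_max _ _ _ _

variable [Fintype V]

lemma sum_mul_inf_add_sum_mul_sup (a : V → ℝ) (σ τ : V → ℤ) :
    ∑ i, a i * ((σ ⊓ τ) i : ℝ) + ∑ i, a i * ((σ ⊔ τ) i : ℝ) =
      ∑ i, a i * (σ i : ℝ) + ∑ i, a i * (τ i : ℝ) := by
  simp only [← sum_add_distrib, ← mul_add, Pi.inf_apply, Pi.sup_apply, Int.cast_min,
    Int.cast_max, min_add_max]

lemma M_inf_add_M_sup (σ τ : V → ℤ) : M (σ ⊓ τ) + M (σ ⊔ τ) = M σ + M τ := by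
  simpa [M] using sum_mul_inf_add_sum_mul_sup (fun _ => 1) σ τ

lemma M_strictMono : StrictMono (M : (V → ℤ) → ℝ) := by
  intro σ τ hlt
  obtain ⟨hle, i, hi⟩ := Pi.lt_def.mp hlt
  exact sum_lt_sum (fun j _ => by exact_mod_cast hle j)
    ⟨i, mem_univ i, by exact_mod_cast hi⟩

variable (G : SimpleGraph V) [DecidableRel G.Adj] (J : ℝ) (h : V → ℝ)

lemma E_eq_E₀_sub_mul_M (σ : V → ℤ) (H : ℝ) : E G J h σ H = E₀ G J h σ - H * M σ := by
  simp only [E₀, E, M, add_mul, sum_add_distrib, mul_sum, zero_add]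
  ring

lemma E₀_inf_add_E₀_sup_le (hJ : 0 ≤ J) (σ τ : V → ℤ) :
    E₀ G J h (σ ⊓ τ) + E₀ G J h (σ ⊔ τ) ≤ E₀ G J h σ + E₀ G J h τ := by
  have hpair : ∑ e ∈ G.edgeFinset, pairProd σ e + ∑ e ∈ G.edgeFinset, pairProd τ e ≤
      ∑ e ∈ G.edgeFinset, pairProd (σ ⊓ τ) e + ∑ e ∈ G.edgeFinset, pairProd (σ ⊔ τ) e := by
    simp only [← sum_add_distrib]
    exact sum_le_sum fun e _ => pairProd_add_pairProd_le σ τ e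
  have hfield := sum_mul_inf_add_sum_mul_sup h σ τ
  simp only [E₀, E, zero_add]
  linarith [mul_le_mul_of_nonneg_left hpair hJ]

variable {G J h}

lemma IsGroundState.le_of_lt (hJ : 0 ≤ J) {H₁ H₂ : ℝ} {C₁ C₂ : V → ℤ}
    (h₂ : IsGroundState G J h H₂ C₂) (h₁ : IsGroundState G J h H₁ C₁) (hH : H₂ < H₁) :
    C₂ ≤ C₁ := by
  obtain ⟨hs₂, hmin₂⟩ := h₂
  obtain ⟨hs₁, hmin₁⟩ := h₁
  have hsup := hmin₁ _ (hs₁.sup hs₂)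
  have hinf := hmin₂ _ (hs₁.inf hs₂)
  simp only [E_eq_E₀_sub_mul_M] at hsup hinf
  have hprod : (H₁ - H₂) * (M (C₁ ⊔ C₂) - M C₁) ≤ 0 := by
    linear_combination hsup + hinf + E₀_inf_add_E₀_sup_le G J h hJ C₁ C₂ -
      H₂ * M_inf_add_M_sup C₁ C₂
  have hM : M (C₁ ⊔ C₂) ≤ M C₁ :=
    sub_nonpos.mp (nonpos_of_mul_nonpos_right hprod (sub_pos.mpr hH))
  refine sup_eq_left.mp (le_sup_left.eq_of_not_lt fun hlt => ?_).symm
  exact (M_strictMono hlt).not_ge hM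

end

section RFIM

variable {V : Type*} [Fintype V] [Nonempty V] [DecidableEq V]
variable (G : SimpleGraph V) [DecidableRel G.Adj]
variable (J : ℝ) (h : V → ℝ)

/-- No-passing rule (decreasing field): down spins stay down as the external
field is decreased. -/
theorem no_passing_decreasing
    (hJ : 0 < J) (H₁ H₂ : ℝ) (C₁ C₂ : V → ℤ)
    (h₁ : IsGroundState G J h H₁ C₁) (h₂ : IsGroundState G J h H₂ C₂)
    (hH : H₂ < H₁) :
    ∀ i, C₁ i = -1 → C₂ i = -1 := by
  intro i hi
  have hle : C₂ i ≤ C₁ i := h₂.le_of_lt hJ.le h₁ hH i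
  rcases h₂.1 i with h' | h' <;> omega

end RFIM
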